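/- For all z, w ∈ ℂ, the Wronskian-type identity holds: s_2(z) s_1(w) − s_1(z) s_2(w) = (1/(i√3)) (s_0(z + ζ_2 w) − s_0(z + ζ_3 w)), where ζ_2 = (-1+i√3)/2, ζ_3 = (-1-i√3)/2. -/

import Mathlib

open Complex

noncomputable def ζ2 : ℂ := (-1 + Complex.I * Real.sqrt 3) / 2
noncomputable def ζ3 : ℂ := (-1 - Complex.I * Real.sqrt 3) / 2

/-- `s p z = (1/3) ∑_{k=1}^{3} ζ_k^{-p} e^{z ζ_k}` with `ζ_1 = 1`. -/
noncomputable def s (p : ℕ) (z : ℂ) : ℂ :=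
  (Complex.exp z + Complex.exp (z * ζ2) / ζ2 ^ p + Complex.exp (z * ζ3) / ζ3 ^ p) / 3

/-! Since `ζ2ζ3 = 1` and `ζ2² = ζ3`, every exponential `e^{(z + ζ_j w) ζ_k}` splits as
`e^{z ζ_k} e^{w ζ_l}` with `ζ_l = ζ_j ζ_k`, and the division by `ζ_k^p` becomes a multiplication
by a cube root of unity. Both sides then become bilinear forms in the exponentials
`e^{z ζ_k}`, `e^{w ζ_l}`, and they differ by a multiple of `ζ2 + ζ3 + 1 = 0`. -/

lemma ofReal_sqrt_three_sq : ((Real.sqrt 3 : ℝ) : ℂ) ^ 2 = 3 := by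
  exact_mod_cast Real.sq_sqrt (by norm_num : (0 : ℝ) ≤ 3)

lemma ζ2_mul_ζ3 : ζ2 * ζ3 = 1 := by
  rw [ζ2, ζ3]
  linear_combination (ofReal_sqrt_three_sq - (Real.sqrt 3 : ℂ) ^ 2 * I_sq) / 4

lemma ζ2_sq : ζ2 ^ 2 = ζ3 := by
  rw [ζ2, ζ3]
  linear_combination ((Real.sqrt 3 : ℂ) ^ 2 * I_sq - ofReal_sqrt_three_sq) / 4

lemma ζ3_sq : ζ3 ^ 2 = ζ2 := by
  rw [ζ2, ζ3]
  linear_combination ((Real.sqrt 3 : ℂ) ^ 2 * I_sq - ofReal_sqrt_three_sq) / 4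

lemma ζ2_add_ζ3 : ζ2 + ζ3 = -1 := by
  rw [ζ2, ζ3]; ring

lemma ζ2_sub_ζ3 : ζ2 - ζ3 = I * Real.sqrt 3 := by
  rw [ζ2, ζ3]; ring

lemma one_div_I_mul_sqrt_three : 1 / (I * Real.sqrt 3) = (ζ3 - ζ2) / 3 := by
  have hsq : (ζ2 - ζ3) ^ 2 = -3 := by
    rw [ζ2_sub_ζ3, mul_pow, I_sq, ofReal_sqrt_three_sq]; ring
  have hne : ζ2 - ζ3 ≠ 0 := fun h => by norm_num [h] at hsq
  rw [← ζ2_sub_ζ3, div_eq_div_iff hne three_ne_zero]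
  linear_combination hsq

lemma ζ2_inv : ζ2⁻¹ = ζ3 := inv_eq_of_mul_eq_one_right ζ2_mul_ζ3

lemma ζ3_inv : ζ3⁻¹ = ζ2 := inv_eq_of_mul_eq_one_left ζ2_mul_ζ3

lemma s_one (z : ℂ) : s 1 z = (exp z + exp (z * ζ2) * ζ3 + exp (z * ζ3) * ζ2) / 3 := by
  simp only [s, pow_one, div_eq_mul_inv (exp _), ζ2_inv, ζ3_inv]

lemma s_two (z : ℂ) : s 2 z = (exp z + exp (z * ζ2) * ζ2 + exp (z * ζ3) * ζ3) / 3 := by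
  simp only [s, ζ2_sq, ζ3_sq, div_eq_mul_inv (exp _), ζ2_inv, ζ3_inv]

lemma s_zero_add_ζ2_mul (z w : ℂ) :
    s 0 (z + ζ2 * w) = (exp z * exp (w * ζ2) + exp (z * ζ2) * exp (w * ζ3)
      + exp (z * ζ3) * exp w) / 3 := by
  have h2 : (z + ζ2 * w) * ζ2 = z * ζ2 + w * ζ3 := by linear_combination w * ζ2_sq
  have h3 : (z + ζ2 * w) * ζ3 = z * ζ3 + w := by linear_combination w * ζ2_mul_ζ3
  rw [s, h2, h3, mul_comm ζ2 w]
  simp only [pow_zero, div_one, exp_add]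

lemma s_zero_add_ζ3_mul (z w : ℂ) :
    s 0 (z + ζ3 * w) = (exp z * exp (w * ζ3) + exp (z * ζ2) * exp w
      + exp (z * ζ3) * exp (w * ζ2)) / 3 := by
  have h2 : (z + ζ3 * w) * ζ2 = z * ζ2 + w := by linear_combination w * ζ2_mul_ζ3
  have h3 : (z + ζ3 * w) * ζ3 = z * ζ3 + w * ζ2 := by linear_combination w * ζ3_sq
  rw [s, h2, h3, mul_comm ζ3 w]
  simp only [pow_zero, div_one, exp_add]

theorem s_wronskian (z w : ℂ) :
    s 2 z * s 1 w - s 1 z * s 2 w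
      = (1 / (Complex.I * Real.sqrt 3)) * (s 0 (z + ζ2 * w) - s 0 (z + ζ3 * w)) := by
  rw [s_one, s_one, s_two, s_two, s_zero_add_ζ2_mul, s_zero_add_ζ3_mul, one_div_I_mul_sqrt_three]
  linear_combination (ζ2 - ζ3) * (exp (z * ζ2) * exp (w * ζ3) - exp (z * ζ3) * exp (w * ζ2)) / 9
    * ζ2_add_ζ3
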